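/- The intersection B₁ ∩ B₂ of the bisectors B(p̃₀, G₁·p̃₀) and B(p̃₀, G₃⁻¹·p̃₀) is nonempty: the explicit vector X₁₂ = ((1+ω)/4, (3−ω)/8, −(1+ω)/4) satisfies ⟨X₁₂, X₁₂⟩ = −3/4 and |⟨X₁₂, p̃₀⟩| = |⟨X₁₂, G₁·p̃₀⟩| = |⟨X₁₂, G₃⁻¹·p̃₀⟩|. -/

import Mathlib

noncomputable section

open Matrix

/-- ω = i·√7 -/
def ω : ℂ := Complex.I * Real.sqrt 7

def G₁ : Matrix (Fin 3) (Fin 3) ℂ := !![1, 1, (-1-ω)/2; 0, 1, -1; 0, 0, 1]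

def G₃ : Matrix (Fin 3) (Fin 3) ℂ := !![1, 0, 0; -1, 1, 0; (-1+ω)/2, 1, 1]

/-- Hermitian form ⟨Z,W⟩ = Z₁·conj(W₃) + Z₂·conj(W₂) + Z₃·conj(W₁). -/
def herm (Z W : Fin 3 → ℂ) : ℂ :=
  Z 0 * (starRingEnd ℂ) (W 2) + Z 1 * (starRingEnd ℂ) (W 1) + Z 2 * (starRingEnd ℂ) (W 0)

def p₀ : Fin 3 → ℂ := ![1, -(3+ω)/4, -1]

def X₁₂ : Fin 3 → ℂ := ![(1+ω)/4, (3-ω)/8, -(1+ω)/4]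

/-!
All three Hermitian products `⟨X₁₂, p₀⟩`, `⟨X₁₂, G₁ p₀⟩`, `⟨X₁₂, G₃⁻¹ p₀⟩` equal the same
number `-(9 + 5ω)/16`, so their moduli agree. Every computation takes place in `ℚ(ω)` and
only uses `conj ω = -ω` and `ω² = -7`; the vector `G₃⁻¹ p₀` is found by solving `G₃ v = p₀`
rather than by inverting `G₃`.
-/

lemma Matrix.inv_mulVec_eq_of_mulVec_eq {n R : Type*} [Fintype n] [DecidableEq n] [CommRing R]
    {A : Matrix n n R} (hA : IsUnit A.det) {v w : n → R} (h : A *ᵥ v = w) : A⁻¹ *ᵥ w = v := by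
  rw [← h, mulVec_mulVec, nonsing_inv_mul A hA, one_mulVec]

lemma conj_ω : starRingEnd ℂ ω = -ω := by
  simp [ω]

lemma ω_mul_self : ω * ω = -7 := by
  have h7 : (Real.sqrt 7 : ℂ) * Real.sqrt 7 = 7 := by
    exact_mod_cast Real.mul_self_sqrt (by norm_num : (0 : ℝ) ≤ 7)
  simp only [ω]
  linear_combination Complex.I ^ 2 * h7 + 7 * Complex.I_sq

lemma herm_vec3 (a b c d e f : ℂ) :
    herm ![a, b, c] ![d, e, f] = a * starRingEnd ℂ f + b * starRingEnd ℂ e + c * starRingEnd ℂ d :=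
  rfl

lemma G₁_mulVec_p₀ : G₁ *ᵥ p₀ = ![(3+ω)/4, (1-ω)/4, -1] := by
  ext i
  fin_cases i <;> simp [G₁, p₀, mulVec, dotProduct, Fin.sum_univ_three] <;> ring

lemma G₃_det : G₃.det = 1 := by
  simp [G₃, det_fin_three]

lemma G₃_inv_mulVec_p₀ : G₃⁻¹ *ᵥ p₀ = ![1, (1-ω)/4, (-3-ω)/4] := by
  refine inv_mulVec_eq_of_mulVec_eq (by simp [G₃_det]) ?_
  ext i
  fin_cases i <;> simp [G₃, p₀, mulVec, dotProduct, Fin.sum_univ_three] <;> ring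

lemma herm_X₁₂_self : herm X₁₂ X₁₂ = -3/4 := by
  simp only [X₁₂, herm_vec3, map_div₀, map_sub, map_add, map_neg, map_one, map_ofNat, conj_ω]
  linear_combination (7/64 : ℂ) * ω_mul_self

lemma herm_X₁₂_p₀ : herm X₁₂ p₀ = -(9 + 5 * ω) / 16 := by
  simp only [X₁₂, p₀, herm_vec3, map_div₀, map_add, map_neg, map_one, map_ofNat, conj_ω]
  linear_combination (-1/32 : ℂ) * ω_mul_self

lemma herm_X₁₂_G₁_mulVec_p₀ : herm X₁₂ (G₁ *ᵥ p₀) = -(9 + 5 * ω) / 16 := by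
  simp only [X₁₂, G₁_mulVec_p₀, herm_vec3, map_div₀, map_sub, map_add, map_neg, map_one,
    map_ofNat, conj_ω]
  linear_combination (1/32 : ℂ) * ω_mul_self

lemma herm_X₁₂_G₃_inv_mulVec_p₀ : herm X₁₂ (G₃⁻¹ *ᵥ p₀) = -(9 + 5 * ω) / 16 := by
  simp only [X₁₂, G₃_inv_mulVec_p₀, herm_vec3, map_div₀, map_sub, map_neg, map_one, map_ofNat,
    conj_ω]
  linear_combination (1/32 : ℂ) * ω_mul_self

theorem stmt15 :
    herm X₁₂ X₁₂ = -3/4 ∧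
    ‖herm X₁₂ p₀‖ = ‖herm X₁₂ (G₁ *ᵥ p₀)‖ ∧
    ‖herm X₁₂ p₀‖ = ‖herm X₁₂ (G₃⁻¹ *ᵥ p₀)‖ := by
  refine ⟨herm_X₁₂_self, ?_, ?_⟩
  · rw [herm_X₁₂_p₀, herm_X₁₂_G₁_mulVec_p₀]
  · rw [herm_X₁₂_p₀, herm_X₁₂_G₃_inv_mulVec_p₀]
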